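/- Let n_max ∈ ℕ and N ≥ 1, and take the uniform phases θ_k = 2πk/N for k = 0, …, N−1. If there exist M ≥ 1 and bin edges x_1 < … < x_{M+1} such that the family of truncated homodyne POVM matrices {Π(I_i, θ_k)} (with I_i = [x_i, x_{i+1})) spans M_{n_max+1}(ℂ) over ℂ, then either N ≥ 2·n_max + 1, or both n_max < N ≤ 2·n_max and N is odd. -/

import Mathlib

/-- The `n`-th physicists' Hermite polynomial (as a function),
`H_n(x) = (−1)^n e^{x²} (d/dx)^n e^{−x²}`. -/
noncomputable def physHermite (n : ℕ) (x : ℝ) : ℝ :=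
  (-1 : ℝ) ^ n * Real.exp (x ^ 2) * iteratedDeriv n (fun y => Real.exp (-y ^ 2)) x

/-- The normalized Hermite overlap integral
`(2^{m+n} m! n! π)^{−1/2} ∫_u^v H_m(x) H_n(x) e^{−x²} dx`. -/
noncomputable def hermOverlap (m n : ℕ) (u v : ℝ) : ℝ :=
  (Real.sqrt (2 ^ (m + n) * m.factorial * n.factorial * Real.pi))⁻¹ *
    ∫ x in u..v, physHermite m x * physHermite n x * Real.exp (-x ^ 2)

/-- The truncated homodyne POVM matrix `Π([u,v), θ)` for photon-number cutoff `nmax`: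
`Π(I,θ)_{m,n} = e^{i(m−n)θ} (2^{m+n} m! n! π)^{−1/2} ∫_u^v H_m H_n e^{−x²}`. -/
noncomputable def homPOVM (nmax : ℕ) (u v θ : ℝ) :
    Matrix (Fin (nmax + 1)) (Fin (nmax + 1)) ℂ :=
  Matrix.of fun m n =>
    Complex.exp (Complex.I * (((m : ℕ) : ℂ) - ((n : ℕ) : ℂ)) * (θ : ℂ)) *
      (hermOverlap m n u v : ℂ)

lemma hermOverlap_symm (m n : ℕ) (u v : ℝ) : hermOverlap m n u v = hermOverlap n m u v := by
  unfold hermOverlap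
  congr 1
  · congr 2
    rw [add_comm m n]; ring
  · apply intervalIntegral.integral_congr
    intro y _
    ring

/-- **necessary condition.** If for some `M ≥ 1` and bin edges
`x_1 < … < x_{M+1}` the POVM matrices `Π([x_i,x_{i+1}), 2πk/N)` span `M_{n_max+1}(ℂ)`,
then either `N ≥ 2 n_max + 1`, or `n_max < N ≤ 2 n_max` with `N` odd. -/
theorem homPOVM_informationally_complete_necessary (nmax N M : ℕ)
    (hN : 1 ≤ N) (hM : 1 ≤ M) (x : Fin (M + 1) → ℝ) (hx : StrictMono x)
    (hspan : Submodule.span ℂ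
        (Set.range fun p : Fin M × Fin N =>
          homPOVM nmax (x p.1.castSucc) (x p.1.succ)
            (2 * Real.pi * (p.2 : ℕ) / N)) = ⊤) :
    N ≥ 2 * nmax + 1 ∨ (nmax < N ∧ N ≤ 2 * nmax ∧ Odd N) := by
  by_contra hcon
  push_neg at hcon
  obtain ⟨h1, h2⟩ := hcon
  obtain ⟨d, hd1, hd2, t, ht⟩ : ∃ d : ℕ, 1 ≤ d ∧ d ≤ nmax ∧ ∃ t, 2 * d = N * t := by
    by_cases hle : N ≤ nmax
    · exact ⟨N, hN, hle, 2, by ring⟩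
    · have hlt : nmax < N := lt_of_not_ge hle
      have hle2 : N ≤ 2 * nmax := by omega
      have hev : ¬ Odd N := h2 hlt hle2
      rw [Nat.not_odd_iff_even] at hev
      obtain ⟨s, hs⟩ := hev
      exact ⟨s, by omega, by omega, 1, by omega⟩
  set i : Fin (nmax + 1) := ⟨d, by omega⟩ with hi
  set j : Fin (nmax + 1) := ⟨0, by omega⟩ with hj
  let f : Matrix (Fin (nmax + 1)) (Fin (nmax + 1)) ℂ →ₗ[ℂ] ℂ :=
  { toFun := fun A => A i j - A j i
    map_add' := fun A B => by simp [Matrix.add_apply]; ring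
    map_smul' := fun c A => by simp [Matrix.smul_apply]; ring }
  have hNne : (N : ℂ) ≠ 0 := Nat.cast_ne_zero.mpr (by omega)
  have hgen : ∀ p : Fin M × Fin N,
      f (homPOVM nmax (x p.1.castSucc) (x p.1.succ) (2 * Real.pi * (p.2 : ℕ) / N)) = 0 := by
    intro p
    show homPOVM nmax (x p.1.castSucc) (x p.1.succ) (2 * Real.pi * (p.2 : ℕ) / N) i j
        - homPOVM nmax (x p.1.castSucc) (x p.1.succ) (2 * Real.pi * (p.2 : ℕ) / N) j i = 0
    have hij : ((i : ℕ) : ℂ) = (d : ℂ) := by rw [hi]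
    have hji : ((j : ℕ) : ℂ) = 0 := by rw [hj]; simp
    have htC : (2 : ℂ) * d = N * t := by exact_mod_cast ht
    have hexp : Complex.exp (Complex.I * (((i : ℕ) : ℂ) - ((j : ℕ) : ℂ))
          * ((2 * Real.pi * (p.2 : ℕ) / N : ℝ) : ℂ))
        = Complex.exp (Complex.I * (((j : ℕ) : ℂ) - ((i : ℕ) : ℂ))
          * ((2 * Real.pi * (p.2 : ℕ) / N : ℝ) : ℂ)) := by
      rw [hij, hji, Complex.exp_eq_exp_iff_exists_int]
      refine ⟨(t * p.2 : ℕ), ?_⟩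
      push_cast
      field_simp
      linear_combination ((p.2 : ℕ) : ℂ) * htC
    rw [homPOVM, Matrix.of_apply, Matrix.of_apply, hexp,
      hermOverlap_symm (i : ℕ) (j : ℕ)]
    ring
  have hker : Submodule.span ℂ
      (Set.range fun p : Fin M × Fin N =>
        homPOVM nmax (x p.1.castSucc) (x p.1.succ) (2 * Real.pi * (p.2 : ℕ) / N))
      ≤ LinearMap.ker f := by
    rw [Submodule.span_le]
    rintro _ ⟨p, rfl⟩
    exact hgen p
  rw [hspan, top_le_iff, LinearMap.ker_eq_top] at hker
  have hij' : i ≠ j := by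
    intro h
    have : d = 0 := congrArg Fin.val h
    omega
  have := congrFun (congrArg (fun g => g.toFun) hker) (Matrix.single i j 1)
  simp only [f, LinearMap.zero_apply] at this
  rw [Matrix.single_apply_same] at this
  rw [Matrix.single_apply_of_ne _ _ _ _ _ (by tauto)] at this
  simp at this
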